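/- arXiv:1309.6579 — 6 statements merged into one kernel-verified Lean document; each statement's English description precedes it below -/
import Mathlib

section
/- Let ~ be a homogeneous equivalence relation on a homogeneous space X for a right G-action. Then ~ is regular if and only if for each x ∈ X, the stabilizer Stab_G(x) is a normal subgroup of N_G([x]) := {g ∈ G : x·g ~ x}. -/
/-! The stabilizer of `x·h` is the conjugate `h⁻¹ Stab(x) h`. If `x·h ~ x`, regularity says this
conjugate equals `Stab(x)`, which is normality in `N_G([x])`. Conversely, normality gives
`h⁻¹ Stab(x) h ⊆ Stab(x)`, i.e. `Stab(x·h) ⊆ Stab(x)`, whenever `x·h ~ x`. As the action is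
transitive, every `y ~ x` has this form, and applying the inclusion to both `y ~ x` and `x ~ y`
gives equality. -/

section RightAction

variable {X G : Type*} [Group G] {act : X → G → X}

theorem act_act_eq_self_iff (hact_one : ∀ x, act x 1 = x)
    (hact_mul : ∀ x g h, act (act x g) h = act x (g * h)) (x : X) (h g : G) :
    act (act x h) g = act x h ↔ act x (h * g * h⁻¹) = x := by
  rw [hact_mul]
  constructor
  · intro e
    rw [← hact_mul, e, hact_mul, mul_inv_cancel, hact_one]
  · intro e
    calc act x (h * g) = act (act x (h * g * h⁻¹)) h := by rw [hact_mul, inv_mul_cancel_right]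
      _ = act x h := by rw [e]

theorem act_eq_self_of_rel_of_conj_stable (hact_one : ∀ x, act x 1 = x)
    (hact_mul : ∀ x g h, act (act x g) h = act x (g * h))
    (htrans : ∀ x y : X, ∃ g : G, act x g = y) {r : X → X → Prop}
    (hN : ∀ x : X, ∀ h : G, r (act x h) x → ∀ g : G, act x g = x → act x (h⁻¹ * g * h) = x)
    {x y : X} (hr : r y x) {g : G} (hg : act y g = y) : act x g = x := by
  obtain ⟨h, rfl⟩ := htrans x y
  have hconj := hN x h hr _ ((act_act_eq_self_iff hact_one hact_mul x h g).mp hg)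
  simpa only [mul_assoc, inv_mul_cancel_left, mul_inv_cancel_left, inv_mul_cancel, mul_one]
    using hconj

end RightAction

theorem regular_iff_stab_normal_in_class_stabilizer_general {X : Type*} {G : Type*} [Group G]
    (act : X → G → X)
    (hact_one : ∀ x, act x 1 = x)
    (hact_mul : ∀ x g h, act (act x g) h = act x (g * h))
    (htrans : ∀ x y : X, ∃ g : G, act x g = y)
    (r : X → X → Prop)
    (hequiv : Equivalence r) :
    (∀ x y, r x y → {g : G | act x g = x} = {g : G | act y g = y}) ↔
    (∀ x : X, ∀ h : G, r (act x h) x → ∀ g : G, act x g = x →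
      act x (h⁻¹ * g * h) = x) := by
  constructor
  · intro hreg x h hr g hg
    have hstab : act (act x h) (h⁻¹ * g * h) = act x h := by
      rw [act_act_eq_self_iff hact_one hact_mul]
      simpa only [mul_assoc, mul_inv_cancel_left, mul_inv_cancel, mul_one] using hg
    exact (Set.ext_iff.mp (hreg _ _ hr) _).mp hstab
  · intro hN x y hr
    ext g
    exact ⟨act_eq_self_of_rel_of_conj_stable hact_one hact_mul htrans hN hr,
      act_eq_self_of_rel_of_conj_stable hact_one hact_mul htrans hN (hequiv.symm hr)⟩

/-- A homogeneous equivalence relation on a homogeneous `G`-space is regular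
(equivalent points have equal stabilizers) if and only if each stabilizer
`Stab_G(x)` is normal in `N_G([x]) = {g : x·g ~ x}` (closed under conjugation
by elements of `N_G([x])`). -/
theorem regular_iff_stab_normal_in_class_stabilizer {X : Type*} {G : Type*} [Group G]
    (act : X → G → X)
    (hact_one : ∀ x, act x 1 = x)
    (hact_mul : ∀ x g h, act (act x g) h = act x (g * h))
    (htrans : ∀ x y : X, ∃ g : G, act x g = y)
    (r : X → X → Prop)
    (hequiv : Equivalence r)
    (hhomog : ∀ x y (g : G), r x y → r (act x g) (act y g)) :
    (∀ x y, r x y → {g : G | act x g = x} = {g : G | act y g = y}) ↔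
    (∀ x : X, ∀ h : G, r (act x h) x → ∀ g : G, act x g = x →
      act x (h⁻¹ * g * h) = x) :=
  regular_iff_stab_normal_in_class_stabilizer_general act hact_one hact_mul htrans r hequiv
end

section
/- Let ~ be a regular equivalence relation on a homogeneous space X for a right G-action, let x ∈ X, and let g ∈ N_G([x]) (i.e., x·g ~ x). Then the map w_g^x : X → X defined on each element x·h by x·h ↦ x·gh is well-defined, bijective, commutes with the G-action, and preserves every equivalence class of ~. -/
/-! If `x·g ~ x`, regularity gives `Stab(x·g) = Stab(x)`. Since `x·h = x·k` iff
`h k⁻¹ ∈ Stab(x)` and `x·gh = x·gk` iff `h k⁻¹ ∈ Stab(x·g)`, the rule `x·h ↦ x·gh` is well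
defined and injective; it is onto because `x·g⁻¹h ↦ x·h`, it commutes with the action because
it is a left translation, and `x·gh ~ x·h` by homogeneity. -/

/-- A permutation of `X` commutes with the right `G`-action `act`. -/
def IsEquivariant {X G : Type*} (act : X → G → X) (φ : Equiv.Perm X) : Prop :=
  ∀ x g, φ (act x g) = act (φ x) g

section

variable {X G : Type*} [Group G] {act : X → G → X}

theorem act_eq_act_iff_act_mul_inv_eq (hact_one : ∀ x, act x 1 = x)
    (hact_mul : ∀ x g h, act (act x g) h = act x (g * h)) (x : X) (h k : G) :
    act x h = act x k ↔ act x (h * k⁻¹) = x := by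
  constructor
  · intro hhk
    rw [← hact_mul, hhk, hact_mul, mul_inv_cancel, hact_one]
  · intro hx
    calc act x h = act x (h * k⁻¹ * k) := by rw [inv_mul_cancel_right]
      _ = act x k := by rw [← hact_mul, hx]

theorem act_mul_eq_act_mul_iff (hact_one : ∀ x, act x 1 = x)
    (hact_mul : ∀ x g h, act (act x g) h = act x (g * h)) {x : X} {g : G}
    (hstab : {a : G | act (act x g) a = act x g} = {a : G | act x a = x}) (h k : G) :
    act x (g * h) = act x (g * k) ↔ act x h = act x k := by
  rw [← hact_mul, ← hact_mul, act_eq_act_iff_act_mul_inv_eq hact_one hact_mul,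
    act_eq_act_iff_act_mul_inv_eq hact_one hact_mul]
  exact Set.ext_iff.mp hstab (h * k⁻¹)

/-- The map `x·h ↦ x·gh`, read through a chosen `h` with `x·h = y`. -/
noncomputable def leftTranslate (htrans : ∀ x y : X, ∃ g : G, act x g = y) (x : X) (g : G)
    (y : X) : X :=
  act x (g * Classical.choose (htrans x y))

theorem leftTranslate_act (hact_one : ∀ x, act x 1 = x)
    (hact_mul : ∀ x g h, act (act x g) h = act x (g * h))
    (htrans : ∀ x y : X, ∃ g : G, act x g = y) {x : X} {g : G}
    (hstab : {a : G | act (act x g) a = act x g} = {a : G | act x a = x}) (h : G) :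
    leftTranslate htrans x g (act x h) = act x (g * h) :=
  (act_mul_eq_act_mul_iff hact_one hact_mul hstab _ _).mpr
    (Classical.choose_spec (htrans x (act x h)))

theorem leftTranslate_injective (hact_one : ∀ x, act x 1 = x)
    (hact_mul : ∀ x g h, act (act x g) h = act x (g * h))
    (htrans : ∀ x y : X, ∃ g : G, act x g = y) {x : X} {g : G}
    (hstab : {a : G | act (act x g) a = act x g} = {a : G | act x a = x}) :
    Function.Injective (leftTranslate htrans x g) := by
  intro y z hyz
  obtain ⟨h, rfl⟩ := htrans x y
  obtain ⟨k, rfl⟩ := htrans x z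
  rw [leftTranslate_act hact_one hact_mul htrans hstab,
    leftTranslate_act hact_one hact_mul htrans hstab] at hyz
  exact (act_mul_eq_act_mul_iff hact_one hact_mul hstab h k).mp hyz

theorem leftTranslate_surjective (hact_one : ∀ x, act x 1 = x)
    (hact_mul : ∀ x g h, act (act x g) h = act x (g * h))
    (htrans : ∀ x y : X, ∃ g : G, act x g = y) {x : X} {g : G}
    (hstab : {a : G | act (act x g) a = act x g} = {a : G | act x a = x}) :
    Function.Surjective (leftTranslate htrans x g) := by
  intro y
  obtain ⟨h, rfl⟩ := htrans x y
  exact ⟨act x (g⁻¹ * h), by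
    rw [leftTranslate_act hact_one hact_mul htrans hstab, mul_inv_cancel_left]⟩

theorem leftTranslate_act_act (hact_one : ∀ x, act x 1 = x)
    (hact_mul : ∀ x g h, act (act x g) h = act x (g * h))
    (htrans : ∀ x y : X, ∃ g : G, act x g = y) {x : X} {g : G}
    (hstab : {a : G | act (act x g) a = act x g} = {a : G | act x a = x}) (y : X) (k : G) :
    leftTranslate htrans x g (act y k) = act (leftTranslate htrans x g y) k := by
  obtain ⟨h, rfl⟩ := htrans x y
  rw [hact_mul, leftTranslate_act hact_one hact_mul htrans hstab,
    leftTranslate_act hact_one hact_mul htrans hstab, hact_mul, mul_assoc]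

end

theorem class_stabilizer_element_gives_automorphism_general {X : Type*} {G : Type*} [Group G]
    (act : X → G → X)
    (hact_one : ∀ x, act x 1 = x)
    (hact_mul : ∀ x g h, act (act x g) h = act x (g * h))
    (htrans : ∀ x y : X, ∃ g : G, act x g = y)
    (r : X → X → Prop)
    (hhomog : ∀ x y (g : G), r x y → r (act x g) (act y g))
    (hreg : ∀ x y, r x y → {g : G | act x g = x} = {g : G | act y g = y})
    (x : X) (g : G) (hg : r (act x g) x) :
    (∀ h k : G, act x h = act x k → act x (g * h) = act x (g * k)) ∧
    (∃ φ : Equiv.Perm X,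
      (∀ h : G, φ (act x h) = act x (g * h)) ∧
      IsEquivariant act φ ∧
      (∀ y : X, r (φ y) y)) := by
  have hstab := hreg _ _ hg
  refine ⟨fun h k => (act_mul_eq_act_mul_iff hact_one hact_mul hstab h k).mpr, ?_⟩
  have hbij : Function.Bijective (leftTranslate htrans x g) :=
    ⟨leftTranslate_injective hact_one hact_mul htrans hstab,
      leftTranslate_surjective hact_one hact_mul htrans hstab⟩
  refine ⟨Equiv.ofBijective _ hbij, leftTranslate_act hact_one hact_mul htrans hstab,
    leftTranslate_act_act hact_one hact_mul htrans hstab, fun y => ?_⟩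
  obtain ⟨h, rfl⟩ := htrans x y
  rw [Equiv.ofBijective_apply, leftTranslate_act hact_one hact_mul htrans hstab, ← hact_mul]
  exact hhomog _ _ h hg

/-- For a regular equivalence relation `r` on a homogeneous `G`-space `X`,
`x ∈ X` and `g ∈ N_G([x])` (i.e. `x·g ~ x`), the assignment `x·h ↦ x·(gh)` is
well defined, and extends to a bijection of `X` commuting with the `G`-action
and preserving every equivalence class. -/
theorem class_stabilizer_element_gives_automorphism {X : Type*} {G : Type*} [Group G]
    (act : X → G → X)
    (hact_one : ∀ x, act x 1 = x)
    (hact_mul : ∀ x g h, act (act x g) h = act x (g * h))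
    (htrans : ∀ x y : X, ∃ g : G, act x g = y)
    (r : X → X → Prop)
    (hequiv : Equivalence r)
    (hhomog : ∀ x y (g : G), r x y → r (act x g) (act y g))
    (hreg : ∀ x y, r x y → {g : G | act x g = x} = {g : G | act y g = y})
    (x : X) (g : G) (hg : r (act x g) x) :
    (∀ h k : G, act x h = act x k → act x (g * h) = act x (g * k)) ∧
    (∃ φ : Equiv.Perm X,
      (∀ h : G, φ (act x h) = act x (g * h)) ∧
      IsEquivariant act φ ∧
      (∀ y : X, r (φ y) y)) :=
  class_stabilizer_element_gives_automorphism_general act hact_one hact_mul htrans r hhomog hreg x g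
    hg
end

section
/- An equivalence relation ~ on a homogeneous space X for a right G-action is regular if and only if there exists a subgroup W of Aut_G(X) such that the equivalence classes of ~ are exactly the W-orbits in X. -/
section Perms

variable {X G : Type*} (act : X → G → X)

def equivariantPerms : Subgroup (Equiv.Perm X) where
  carrier := {φ | IsEquivariant act φ}
  one_mem' _ _ := rfl
  mul_mem' {φ ψ} hφ hψ x g := by
    change φ (ψ (act x g)) = act (φ (ψ x)) g
    rw [hψ, hφ]
  inv_mem' {φ} hφ x g := by
    apply φ.injective
    rw [hφ (φ⁻¹ x) g]
    simp only [Equiv.Perm.coe_inv, Equiv.apply_symm_apply]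

variable {r : X → X → Prop}

def classPreservingPerms (hr : Equivalence r) : Subgroup (Equiv.Perm X) where
  carrier := {φ | ∀ z, r z (φ z)}
  one_mem' := hr.refl
  mul_mem' {φ ψ} hφ hψ z := hr.trans (hψ z) (hφ (ψ z))
  inv_mem' {φ} hφ z := by
    simpa only [Equiv.Perm.coe_inv, Equiv.apply_symm_apply] using hr.symm (hφ (φ⁻¹ z))

end Perms

theorem IsEquivariant.stabilizer_eq {X G : Type*} {act : X → G → X} {w : Equiv.Perm X}
    (hw : IsEquivariant act w) (x : X) :
    {g : G | act x g = x} = {g : G | act (w x) g = w x} := by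
  ext g
  change act x g = x ↔ act (w x) g = w x
  rw [← hw x g, w.injective.eq_iff]

section Transitive

variable {X G : Type*} [Group G] {act : X → G → X}

theorem act_eq_act_of_stabilizer_subset
    (hact_one : ∀ x, act x 1 = x) (hact_mul : ∀ x g h, act (act x g) h = act x (g * h))
    {x y : X} (hs : {g : G | act x g = x} ⊆ {g : G | act y g = y}) {g g' : G}
    (h : act x g = act x g') : act y g = act y g' := by
  have hx : act x (g * g'⁻¹) = x := by
    rw [← hact_mul, h, hact_mul, mul_inv_cancel, hact_one]
  calc act y g = act (act y (g * g'⁻¹)) g' := by rw [hact_mul, inv_mul_cancel_right]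
    _ = act y g' := by rw [hs hx]

theorem exists_map_act_eq_act
    (hact_one : ∀ x, act x 1 = x) (hact_mul : ∀ x g h, act (act x g) h = act x (g * h))
    (htrans : ∀ x y : X, ∃ g : G, act x g = y)
    {x y : X} (hs : {g : G | act x g = x} ⊆ {g : G | act y g = y}) :
    ∃ f : X → X, ∀ g, f (act x g) = act y g := by
  choose σ hσ using htrans x
  exact ⟨fun z => act y (σ z), fun g =>
    act_eq_act_of_stabilizer_subset hact_one hact_mul hs (hσ (act x g))⟩

theorem exists_perm_act_eq_act
    (hact_one : ∀ x, act x 1 = x) (hact_mul : ∀ x g h, act (act x g) h = act x (g * h))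
    (htrans : ∀ x y : X, ∃ g : G, act x g = y)
    {x y : X} (hs : {g : G | act x g = x} = {g : G | act y g = y}) :
    ∃ φ : Equiv.Perm X, ∀ g, φ (act x g) = act y g := by
  obtain ⟨f, hf⟩ := exists_map_act_eq_act hact_one hact_mul htrans hs.subset
  obtain ⟨f', hf'⟩ := exists_map_act_eq_act hact_one hact_mul htrans hs.symm.subset
  refine ⟨⟨f, f', fun z => ?_, fun z => ?_⟩, hf⟩
  · obtain ⟨g, rfl⟩ := htrans x z
    rw [hf, hf']
  · obtain ⟨g, rfl⟩ := htrans y z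
    rw [hf', hf]

theorem isEquivariant_of_act_eq_act
    (hact_mul : ∀ x g h, act (act x g) h = act x (g * h))
    (htrans : ∀ x y : X, ∃ g : G, act x g = y)
    {φ : Equiv.Perm X} {x y : X} (hφ : ∀ g, φ (act x g) = act y g) :
    IsEquivariant act φ := by
  intro z k
  obtain ⟨g, rfl⟩ := htrans x z
  rw [hact_mul, hφ, hφ, hact_mul]

end Transitive

/-- An equivalence relation on a homogeneous `G`-space `X` is regular
(homogeneous with equivalent points having equal stabilizers) if and only if
its classes are the orbits of a subgroup `W` of `Aut_G(X)`. -/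
theorem regular_iff_orbits_of_subgroup {X : Type*} {G : Type*} [Group G]
    (act : X → G → X)
    (hact_one : ∀ x, act x 1 = x)
    (hact_mul : ∀ x g h, act (act x g) h = act x (g * h))
    (htrans : ∀ x y : X, ∃ g : G, act x g = y)
    (r : X → X → Prop)
    (hequiv : Equivalence r) :
    ((∀ x y (g : G), r x y → r (act x g) (act y g)) ∧
      (∀ x y, r x y → {g : G | act x g = x} = {g : G | act y g = y})) ↔
    (∃ W : Subgroup (Equiv.Perm X),
      (∀ w ∈ W, IsEquivariant act w) ∧
      (∀ x y, r x y ↔ ∃ w ∈ W, (w : Equiv.Perm X) x = y)) := by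
  constructor
  · rintro ⟨hhom, hstab⟩
    refine ⟨equivariantPerms act ⊓ classPreservingPerms hequiv, fun w hw => hw.1,
      fun x y => ⟨fun hxy => ?_, fun ⟨w, hw, hwx⟩ => hwx ▸ hw.2 x⟩⟩
    obtain ⟨φ, hφ⟩ := exists_perm_act_eq_act hact_one hact_mul htrans (hstab x y hxy)
    have hφ_related : ∀ z, r z (φ z) := fun z => by
      obtain ⟨g, rfl⟩ := htrans x z
      exact hφ g ▸ hhom x y g hxy
    refine ⟨φ, ⟨isEquivariant_of_act_eq_act hact_mul htrans hφ, hφ_related⟩, ?_⟩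
    simpa only [hact_one] using hφ 1
  · rintro ⟨W, hW_equiv, hW_orbits⟩
    refine ⟨fun x y g hxy => ?_, fun x y hxy => ?_⟩ <;>
      obtain ⟨w, hw, rfl⟩ := (hW_orbits x y).1 hxy
    · exact (hW_orbits _ _).2 ⟨w, hw, hW_equiv w hw x g⟩
    · exact (hW_equiv w hw).stabilizer_eq x
end

section
/- Let X be a homogeneous space for a right G-action and W ≤ Aut_G(X). Then every bijection φ: [x] → [y] between W-orbits that commutes with the W-action is of the form φ_g^x: w·x ↦ (w·x)·g for some g ∈ G with x·g ∈ [y]. -/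
theorem IsEquivariant.apply_perm_eq_act {X G : Type*} {act : X → G → X} {w : Equiv.Perm X}
    (hw : IsEquivariant act w) {φ : X → X} {x : X} {g : G}
    (hcomm : φ (w x) = w (φ x)) (hφx : φ x = act x g) :
    φ (w x) = act (w x) g := by
  rw [hcomm, hφx, hw]

theorem orbit_bijection_is_right_translation_general {X : Type*} {G : Type*}
    (act : X → G → X)
    (htrans : ∀ x y : X, ∃ g : G, act x g = y)
    (W : Subgroup (Equiv.Perm X))
    (hW : ∀ w ∈ W, IsEquivariant act w)
    (x y : X) (φ : X → X)
    (hmaps : ∀ z ∈ {z | ∃ w ∈ W, (w : Equiv.Perm X) x = z},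
      φ z ∈ {z | ∃ w ∈ W, (w : Equiv.Perm X) y = z})
    (hcomm : ∀ w ∈ W, ∀ z ∈ {z | ∃ w ∈ W, (w : Equiv.Perm X) x = z},
      φ ((w : Equiv.Perm X) z) = (w : Equiv.Perm X) (φ z)) :
    ∃ g : G, act x g ∈ {z | ∃ w ∈ W, (w : Equiv.Perm X) y = z} ∧
      ∀ z ∈ {z | ∃ w ∈ W, (w : Equiv.Perm X) x = z}, φ z = act z g := by
  obtain ⟨g, hg⟩ := htrans x (φ x)
  have hx : x ∈ {z | ∃ w ∈ W, (w : Equiv.Perm X) x = z} := ⟨1, W.one_mem, rfl⟩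
  refine ⟨g, hg ▸ hmaps x hx, ?_⟩
  rintro _ ⟨w, hw, rfl⟩
  exact (hW w hw).apply_perm_eq_act (hcomm w hw x hx) hg.symm

/-- Every bijection between two `W`-orbits on a homogeneous `G`-space which
commutes with the `W`-action is given by the right action of some `g ∈ G`. -/
theorem orbit_bijection_is_right_translation {X : Type*} {G : Type*} [Group G]
    (act : X → G → X)
    (hact_one : ∀ x, act x 1 = x)
    (hact_mul : ∀ x g h, act (act x g) h = act x (g * h))
    (htrans : ∀ x y : X, ∃ g : G, act x g = y)
    (W : Subgroup (Equiv.Perm X))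
    (hW : ∀ w ∈ W, IsEquivariant act w)
    (x y : X) (φ : X → X)
    (hmaps : ∀ z ∈ {z | ∃ w ∈ W, (w : Equiv.Perm X) x = z},
      φ z ∈ {z | ∃ w ∈ W, (w : Equiv.Perm X) y = z})
    (hbij : Set.BijOn φ {z | ∃ w ∈ W, (w : Equiv.Perm X) x = z}
      {z | ∃ w ∈ W, (w : Equiv.Perm X) y = z})
    (hcomm : ∀ w ∈ W, ∀ z ∈ {z | ∃ w ∈ W, (w : Equiv.Perm X) x = z},
      φ ((w : Equiv.Perm X) z) = (w : Equiv.Perm X) (φ z)) :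
    ∃ g : G, act x g ∈ {z | ∃ w ∈ W, (w : Equiv.Perm X) y = z} ∧
      ∀ z ∈ {z | ∃ w ∈ W, (w : Equiv.Perm X) x = z}, φ z = act z g :=
  orbit_bijection_is_right_translation_general act htrans W hW x y φ hmaps hcomm
end

section
/- Let X be a homogeneous space for a right G-action and W ≤ Aut_G(X). Define the groupoid N_G^W with objects the W-orbits and morphisms N_G^W([x],[y]) = {g ∈ G : x·g ∈ [y]}, composed by multiplication in G, and define the orbit groupoid W\X with objects the W-orbits and morphisms the W-equivariant bijections between orbits. Then the collection Stab_G of subgroups Stab_G(x) ≤ N_G^W([x],[x]) is a normal subgroup of the groupoid N_G^W, and W\X is isomorphic to the quotient groupoid N_G^W/Stab_G. -/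
def WOrbit {X : Type*} (W : Subgroup (Equiv.Perm X)) (x : X) : Set X :=
  {z | ∃ w ∈ W, (w : Equiv.Perm X) x = z}

theorem mem_WOrbit_self {X : Type*} (W : Subgroup (Equiv.Perm X)) (x : X) : x ∈ WOrbit W x :=
  ⟨1, W.one_mem, rfl⟩

section RightAction

variable {X G : Type*} {act : X → G → X}

theorem act_eq_act_iff_act_mul_inv_eq_self [Group G] (hact_one : ∀ x, act x 1 = x)
    (hact_mul : ∀ x g h, act (act x g) h = act x (g * h)) {x : X} {g h : G} :
    act x g = act x h ↔ act x (g * h⁻¹) = x := by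
  constructor
  · intro hgh
    rw [← hact_mul, hgh, hact_mul, mul_inv_cancel, hact_one]
  · intro hst
    calc act x g = act (act x (g * h⁻¹)) h := by rw [hact_mul, inv_mul_cancel_right]
      _ = act x h := by rw [hst]

theorem act_eq_act_on_WOrbit {W : Subgroup (Equiv.Perm X)} (hW : ∀ w ∈ W, IsEquivariant act w)
    {x : X} {g h : G} (hgh : act x g = act x h) : ∀ z ∈ WOrbit W x, act z g = act z h := by
  rintro z ⟨w, hw, rfl⟩
  rw [← hW w hw x g, ← hW w hw x h, hgh]

theorem act_conj_eq_self_of_act_mem_WOrbit [Group G] (hact_one : ∀ x, act x 1 = x)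
    (hact_mul : ∀ x g h, act (act x g) h = act x (g * h)) {W : Subgroup (Equiv.Perm X)}
    (hW : ∀ w ∈ W, IsEquivariant act w) {x y : X} {g s : G} (hg : act x g ∈ WOrbit W y)
    (hs : act y s = y) : act x (g * s * g⁻¹) = x := by
  obtain ⟨w, hw, hwy⟩ := hg
  rw [← act_eq_act_iff_act_mul_inv_eq_self hact_one hact_mul, ← hact_mul, ← hwy,
    ← hW w hw y s, hs]

theorem eq_act_on_WOrbit_of_commute {W : Subgroup (Equiv.Perm X)}
    (hW : ∀ w ∈ W, IsEquivariant act w) {x : X} {φ : X → X}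
    (hφ : ∀ w ∈ W, ∀ z ∈ WOrbit W x, φ ((w : Equiv.Perm X) z) = (w : Equiv.Perm X) (φ z))
    {g : G} (hg : act x g = φ x) : ∀ z ∈ WOrbit W x, φ z = act z g := by
  rintro z ⟨w, hw, rfl⟩
  rw [hφ w hw x (mem_WOrbit_self W x), ← hg, hW w hw x g]

end RightAction

/-- Let `X` be a homogeneous space for a right `G`-action and `W ≤ Aut_G(X)`.
In the groupoid `N_G^W` (objects the `W`-orbits, morphisms `[x] → [y]` the
elements `g ∈ G` with `x·g ∈ [y]`), the stabilizers `Stab_G(x)` form a normal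
subgroup, and the quotient groupoid `N_G^W/Stab_G` is isomorphic to the orbit
groupoid `W\X` whose morphisms are the `W`-equivariant bijections between
orbits.  Concretely: (1) conjugating a stabilizer along a morphism lands in a
stabilizer (normality); (2) every `W`-equivariant bijection of orbits is right
translation by some morphism `g` (the comparison functor is full, hence with
(3) an isomorphism on morphisms); (3) two morphisms `g, h : [x] → [y]` induce
the same map on orbits iff they agree modulo `Stab_G(x)`. -/
theorem orbit_groupoid_iso_stabilizer_quotient {X : Type*} {G : Type*} [Group G]
    (act : X → G → X)
    (hact_one : ∀ x, act x 1 = x)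
    (hact_mul : ∀ x g h, act (act x g) h = act x (g * h))
    (htrans : ∀ x y : X, ∃ g : G, act x g = y)
    (W : Subgroup (Equiv.Perm X))
    (hW : ∀ w ∈ W, IsEquivariant act w) :
    -- (1) normality of the stabilizers in the groupoid `N_G^W`
    (∀ (x y : X) (g : G), act x g ∈ WOrbit W y →
      ∀ s : G, act y s = y → act x (g * s * g⁻¹) = x) ∧
    -- (2) every `W`-equivariant bijection of orbits is induced by a morphism
    (∀ (x y : X) (φ : X → X),
      Set.BijOn φ (WOrbit W x) (WOrbit W y) →
      (∀ w ∈ W, ∀ z ∈ WOrbit W x, φ ((w : Equiv.Perm X) z) = (w : Equiv.Perm X) (φ z)) →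
      ∃ g : G, act x g ∈ WOrbit W y ∧ ∀ z ∈ WOrbit W x, φ z = act z g) ∧
    -- (3) two morphisms induce the same bijection iff they differ by a stabilizer
    (∀ (x y : X) (g h : G), act x g ∈ WOrbit W y → act x h ∈ WOrbit W y →
      ((∀ z ∈ WOrbit W x, act z g = act z h) ↔ act x (g * h⁻¹) = x)) := by
  refine ⟨fun x y g hg s hs ↦ act_conj_eq_self_of_act_mem_WOrbit hact_one hact_mul hW hg hs,
    fun x y φ hbij hφ ↦ ?_, fun x y g h _ _ ↦ ?_⟩
  · obtain ⟨g, hg⟩ := htrans x (φ x)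
    exact ⟨g, hg ▸ hbij.mapsTo (mem_WOrbit_self W x), eq_act_on_WOrbit_of_commute hW hφ hg⟩
  · rw [← act_eq_act_iff_act_mul_inv_eq_self hact_one hact_mul]
    exact ⟨fun hall ↦ hall x (mem_WOrbit_self W x), act_eq_act_on_WOrbit hW⟩
end

section
/- In the mutation class of labelled seeds of rank 2 of type A₂ (initial seed the quiver 1 → 2 with cluster (x,y) in ℂ(x,y)), the orbit of the initial labelled seed under the mutation group M₂ has exactly 10 elements, the element (μ₁μ₂)⁵ of M₂ fixes every labelled seed in the orbit, and the transposition (1 2) acts on the orbit in the same way as μ₁μ₂μ₁μ₂μ₁. -/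
noncomputable section

/-- The field `ℂ(x,y)`. -/
abbrev K2 : Type := FractionRing (MvPolynomial (Fin 2) ℂ)

/-- The generators `x, y` of `ℂ(x,y)`. -/
def Xv (i : Fin 2) : K2 :=
  algebraMap (MvPolynomial (Fin 2) ℂ) K2 (MvPolynomial.X i)

/-- A labelled seed of rank 2: an integer `b` recording the quiver (`b` arrows
from vertex `0` to vertex `1` when `b ≥ 0`, and `-b` arrows from `1` to `0`
otherwise) together with the labelled cluster `β : Fin 2 → K2`. -/
abbrev Seed2 : Type := ℤ × (Fin 2 → K2)

/-- Mutation of a rank 2 labelled seed at vertex `i`. -/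
def mutate (i : Fin 2) (s : Seed2) : Seed2 :=
  let b := s.1
  let β := s.2
  let j : Fin 2 := if i = 0 then 1 else 0
  let ain : ℕ := ((if i = 1 then b else -b)).toNat   -- arrows `j → i`
  let aout : ℕ := ((if i = 1 then -b else b)).toNat  -- arrows `i → j`
  (-b, fun k => if k = i then (β j ^ ain + β j ^ aout) / β i else β k)

/-- Relabelling a rank 2 seed by the transposition `(1 2)`. -/
def swapSeed (s : Seed2) : Seed2 :=
  (-s.1, fun k => s.2 (Equiv.swap (0 : Fin 2) 1 k))

/-- Generators of the mutation group `M₂` acting on rank 2 labelled seeds. -/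
inductive Move : Type
  | m1 : Move   -- the mutation `μ₁` (at vertex `0`)
  | m2 : Move   -- the mutation `μ₂` (at vertex `1`)
  | swap : Move -- the transposition `(1 2)`

/-- Applying one generator of `M₂` to a seed (acting on the right). -/
def applyMove (s : Seed2) : Move → Seed2
  | Move.m1 => mutate 0 s
  | Move.m2 => mutate 1 s
  | Move.swap => swapSeed s

/-- Applying a word in the generators of `M₂` to a seed, left to right
(so `applyWord s [g₁, g₂] = (s·g₁)·g₂`). -/
def applyWord (s : Seed2) (w : List Move) : Seed2 :=
  w.foldl applyMove s

/-- The initial labelled seed of type `A₂`: the quiver `1 → 2` with cluster `(x, y)`. -/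
def initialSeed : Seed2 := (1, fun i => Xv i)

/-- The mutation class (the `M₂`-orbit) of the initial seed. -/
def orbitA2 : Set Seed2 := {t | ∃ w : List Move, applyWord initialSeed w = t}

/-! The cluster variables of type `A₂` form the Lyness sequence
`x (n + 2) = (1 + x (n + 1)) / x n`, which has period 5. Alternating mutations walk along the
ten seeds `(1, (x n, x (n + 1)))` for even `n` and `(-1, (x (n + 1), x n))` for odd `n`; each
generator of `M₂` moves along this cycle by `±1` (a mutation) or by `5` (the transposition), so
the orbit is indexed by `ZMod 10` and the three claims become arithmetic in `ZMod 10`. The ten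
seeds are distinct because specializing `(x, y) = (1, 3)` sends `x 0, …, x 4` to
`1, 3, 4, 5/3, 2`. -/

section Lyness

variable {F : Type*} [Field F]

def lyness (a b : F) : ℕ → F
  | 0 => a
  | 1 => b
  | n + 2 => (1 + lyness a b (n + 1)) / lyness a b n

structure LynessNondegenerate (a b : F) : Prop where
  left_ne_zero : a ≠ 0
  right_ne_zero : b ≠ 0
  one_add_left_ne_zero : 1 + a ≠ 0
  one_add_right_ne_zero : 1 + b ≠ 0
  one_add_add_ne_zero : 1 + a + b ≠ 0

variable {a b : F}

theorem lyness_zero (a b : F) : lyness a b 0 = a := rfl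

theorem lyness_one (a b : F) : lyness a b 1 = b := rfl

theorem lyness_add_two (a b : F) (n : ℕ) :
    lyness a b (n + 2) = (1 + lyness a b (n + 1)) / lyness a b n := rfl

theorem lyness_two (a b : F) : lyness a b 2 = (1 + b) / a := rfl

namespace LynessNondegenerate

theorem lyness_three (h : LynessNondegenerate a b) :
    lyness a b 3 = (1 + a + b) / (a * b) := by
  have := h.left_ne_zero
  rw [lyness_add_two, lyness_two, lyness_one]
  field_simp
  ring

theorem lyness_four (h : LynessNondegenerate a b) : lyness a b 4 = (1 + a) / b := by
  have := h.left_ne_zero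
  have := h.right_ne_zero
  have := h.one_add_right_ne_zero
  rw [lyness_add_two, h.lyness_three, lyness_two]
  field_simp
  ring

theorem lyness_periodic (h : LynessNondegenerate a b) : Function.Periodic (lyness a b) 5 := by
  have := h.right_ne_zero
  have := h.one_add_left_ne_zero
  have := h.one_add_add_ne_zero
  have h5 : lyness a b 5 = a := by
    rw [lyness_add_two, h.lyness_four, h.lyness_three]
    field_simp
    ring
  have h6 : lyness a b 6 = b := by
    rw [lyness_add_two, h5, h.lyness_four]
    field_simp
  intro n
  induction n using Nat.twoStepInduction with
  | zero => exact h5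
  | one => exact h6
  | more n ih₀ ih₁ =>
    show (1 + lyness a b (n + 1 + 5)) / lyness a b (n + 5) = _
    rw [ih₀, ih₁, lyness_add_two]

theorem lyness_ne_zero (h : LynessNondegenerate a b) (n : ℕ) : lyness a b n ≠ 0 := by
  rw [← h.lyness_periodic.map_mod_nat]
  obtain ⟨ha, hb, ha', hb', hab⟩ := id h
  have : n % 5 < 5 := Nat.mod_lt _ (by norm_num)
  interval_cases n % 5
  · exact ha
  · exact hb
  · exact div_ne_zero hb' ha
  · rw [h.lyness_three]; exact div_ne_zero hab (mul_ne_zero ha hb)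
  · rw [h.lyness_four]; exact div_ne_zero ha' hb

theorem lyness_mul_lyness_add_two (h : LynessNondegenerate a b) (n : ℕ) :
    lyness a b n * lyness a b (n + 2) = 1 + lyness a b (n + 1) :=
  mul_div_cancel₀ _ (h.lyness_ne_zero n)

theorem one_add_lyness_div_lyness (h : LynessNondegenerate a b) (n : ℕ) :
    (1 + lyness a b (n + 1)) / lyness a b (n + 2) = lyness a b n := by
  rw [← h.lyness_mul_lyness_add_two, mul_div_cancel_right₀ _ (h.lyness_ne_zero _)]

end LynessNondegenerate

end Lyness

section FractionRing

variable {R K L : Type*} [CommRing R] [Field K] [Algebra R K] [IsFractionRing R K] [Field L]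

theorem IsFractionRing.algebraMap_ne_zero_of_map (φ : R →+* L) {p : R} (hp : φ p ≠ 0) :
    algebraMap R K p ≠ 0 := by
  rw [Ne, IsFractionRing.to_map_eq_zero_iff]
  rintro rfl
  exact hp (map_zero φ)

theorem IsFractionRing.div_ne_div_of_map (φ : R →+* L) {p q p' q' : R} (hq : φ q ≠ 0)
    (hq' : φ q' ≠ 0) (h : φ p / φ q ≠ φ p' / φ q') :
    algebraMap R K p / algebraMap R K q ≠ algebraMap R K p' / algebraMap R K q' := by
  rw [Ne, div_eq_div_iff (algebraMap_ne_zero_of_map φ hq) (algebraMap_ne_zero_of_map φ hq'),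
    ← map_mul, ← map_mul, (IsFractionRing.injective R K).eq_iff]
  intro hpq
  apply h
  rw [div_eq_div_iff hq hq', ← map_mul, ← map_mul, hpq]

end FractionRing

open MvPolynomial

local notation "𝒳" => lyness (Xv 0) (Xv 1)

def a2Num : Fin 5 → MvPolynomial (Fin 2) ℂ := ![X 0, X 1, 1 + X 1, 1 + X 0 + X 1, 1 + X 0]

def a2Den : Fin 5 → MvPolynomial (Fin 2) ℂ := ![1, 1, X 0, X 0 * X 1, X 1]

theorem lynessNondegenerate_Xv : LynessNondegenerate (Xv 0) (Xv 1) := by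
  have key (p : MvPolynomial (Fin 2) ℂ) (hp : eval ![1, 3] p ≠ 0) :
      algebraMap _ K2 p ≠ 0 :=
    IsFractionRing.algebraMap_ne_zero_of_map (eval ![1, 3]) hp
  refine ⟨key (X 0) (by simp), key (X 1) (by simp), ?_, ?_, ?_⟩
  · convert key (1 + X 0) (by norm_num) using 1; simp [Xv]
  · convert key (1 + X 1) (by norm_num) using 1; simp [Xv]
  · convert key (1 + X 0 + X 1) (by norm_num) using 1; simp [Xv]

theorem lyness_Xv_eq_div (i : Fin 5) :
    𝒳 i = algebraMap _ K2 (a2Num i) / algebraMap _ K2 (a2Den i) := by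
  have h := lynessNondegenerate_Xv
  fin_cases i <;>
    simp only [Fin.reduceFinMk, lyness_zero, lyness_one, lyness_two, h.lyness_three,
      h.lyness_four] <;>
    simp [a2Num, a2Den, Xv]

theorem lyness_Xv_injective : Function.Injective fun i : Fin 5 => 𝒳 i := by
  intro i j hij
  by_contra hne
  refine IsFractionRing.div_ne_div_of_map (eval ![(1 : ℂ), 3]) ?_ ?_ ?_
    (by simpa only [lyness_Xv_eq_div] using hij)
  · fin_cases i <;> simp [a2Den]
  · fin_cases j <;> simp [a2Den]
  · fin_cases i <;> fin_cases j <;> first | exact (hne rfl).elim | norm_num [a2Num, a2Den]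

theorem mod_five_eq_of_lyness_Xv_eq {m n : ℕ} (h : 𝒳 m = 𝒳 n) : m % 5 = n % 5 := by
  have hper := lynessNondegenerate_Xv.lyness_periodic.map_mod_nat
  rw [← hper m, ← hper n] at h
  simpa using @lyness_Xv_injective ⟨m % 5, Nat.mod_lt _ (by norm_num)⟩
    ⟨n % 5, Nat.mod_lt _ (by norm_num)⟩ h

theorem mutate_zero_one (a c : K2) : mutate 0 (1, ![a, c]) = (-1, ![(1 + c) / a, c]) := by
  refine Prod.ext rfl (funext fun i => ?_)
  fin_cases i <;> simp [mutate]

theorem mutate_zero_neg_one (a c : K2) :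
    mutate 0 (-1, ![a, c]) = (1, ![(1 + c) / a, c]) := by
  refine Prod.ext rfl (funext fun i => ?_)
  fin_cases i <;> simp [mutate, add_comm]

theorem mutate_one_one (a c : K2) : mutate 1 (1, ![a, c]) = (-1, ![a, (1 + a) / c]) := by
  refine Prod.ext rfl (funext fun i => ?_)
  fin_cases i <;> simp [mutate, add_comm]

theorem mutate_one_neg_one (a c : K2) :
    mutate 1 (-1, ![a, c]) = (1, ![a, (1 + a) / c]) := by
  refine Prod.ext rfl (funext fun i => ?_)
  fin_cases i <;> simp [mutate]

theorem swapSeed_mk (b : ℤ) (a c : K2) : swapSeed (b, ![a, c]) = (-b, ![c, a]) := by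
  refine Prod.ext rfl (funext fun i => ?_)
  fin_cases i <;> simp [swapSeed]

def a2Seed (n : ℕ) : Seed2 :=
  if Even n then (1, ![𝒳 n, 𝒳 (n + 1)]) else (-1, ![𝒳 (n + 1), 𝒳 n])

theorem a2Seed_zero : a2Seed 0 = initialSeed := by
  refine Prod.ext (by simp [a2Seed, initialSeed]) (funext fun i => ?_)
  fin_cases i <;> simp [a2Seed, initialSeed, lyness_zero, lyness_one]

theorem a2Seed_periodic : Function.Periodic a2Seed 10 := by
  intro n
  have h : Function.Periodic 𝒳 10 := by
    simpa using lynessNondegenerate_Xv.lyness_periodic.nat_mul 2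
  have h10 : Even (n + 10) ↔ Even n := by
    simp only [Nat.even_iff]; omega
  simp only [a2Seed, h10, Nat.add_right_comm n 10 1, h n, h (n + 1)]

theorem mutate_zero_a2Seed_of_even {n : ℕ} (hn : Even n) :
    mutate 0 (a2Seed n) = a2Seed (n + 1) := by
  rw [a2Seed, if_pos hn, a2Seed, if_neg (Nat.not_even_iff_odd.2 hn.add_one), mutate_zero_one]
  rfl

theorem mutate_one_a2Seed_of_odd {n : ℕ} (hn : Odd n) :
    mutate 1 (a2Seed n) = a2Seed (n + 1) := by
  rw [a2Seed, if_neg (Nat.not_even_iff_odd.2 hn), a2Seed, if_pos hn.add_one, mutate_one_neg_one]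
  rfl

theorem mutate_zero_a2Seed_add_one_of_even {n : ℕ} (hn : Even n) :
    mutate 0 (a2Seed (n + 1)) = a2Seed n := by
  rw [a2Seed, if_neg (Nat.not_even_iff_odd.2 hn.add_one), a2Seed, if_pos hn, mutate_zero_neg_one,
    lynessNondegenerate_Xv.one_add_lyness_div_lyness]

theorem mutate_one_a2Seed_add_one_of_odd {n : ℕ} (hn : Odd n) :
    mutate 1 (a2Seed (n + 1)) = a2Seed n := by
  rw [a2Seed, if_pos hn.add_one, a2Seed, if_neg (Nat.not_even_iff_odd.2 hn), mutate_one_one,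
    lynessNondegenerate_Xv.one_add_lyness_div_lyness]

theorem swapSeed_a2Seed (n : ℕ) : swapSeed (a2Seed n) = a2Seed (n + 5) := by
  have h := lynessNondegenerate_Xv.lyness_periodic
  rcases Nat.even_or_odd n with hn | hn
  · rw [a2Seed, if_pos hn, a2Seed, if_neg (Nat.not_even_iff_odd.2 (hn.add_odd (by decide))),
      swapSeed_mk, Nat.add_right_comm, h, h]
  · rw [a2Seed, if_neg (Nat.not_even_iff_odd.2 hn), a2Seed, if_pos (hn.add_odd (by decide)),
      swapSeed_mk, Nat.add_right_comm, h, h, neg_neg]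

theorem a2Seed_val_natCast (n : ℕ) : a2Seed (n : ZMod 10).val = a2Seed n := by
  rw [ZMod.val_natCast, a2Seed_periodic.map_mod_nat]

def a2Step (k : ZMod 10) : Move → ZMod 10
  | .m1 => if Even k.val then k + 1 else k - 1
  | .m2 => if Even k.val then k - 1 else k + 1
  | .swap => k + 5

theorem applyMove_a2Seed_val (k : ZMod 10) (m : Move) :
    applyMove (a2Seed k.val) m = a2Seed (a2Step k m).val := by
  set n := k.val
  have hk : (n : ZMod 10) = k := ZMod.natCast_zmod_val k
  have hsucc : k + 1 = ((n + 1 : ℕ) : ZMod 10) := by rw [← hk]; push_cast; rfl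
  have hpred : k - 1 = ((n + 9 : ℕ) : ZMod 10) := by
    rw [← hk, sub_eq_iff_eq_add]; push_cast; rw [add_assoc]; norm_num; rfl
  have hback : a2Seed n = a2Seed (n + 9 + 1) := (a2Seed_periodic n).symm
  cases m <;> simp only [applyMove, a2Step]
  · split_ifs with hn
    · rw [mutate_zero_a2Seed_of_even hn, hsucc, a2Seed_val_natCast]
    · rw [hback, mutate_zero_a2Seed_add_one_of_even, hpred, a2Seed_val_natCast]
      exact (Nat.not_even_iff_odd.1 hn).add_odd (by decide)
  · split_ifs with hn
    · rw [hback, mutate_one_a2Seed_add_one_of_odd, hpred, a2Seed_val_natCast]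
      exact hn.add_odd (by decide)
    · rw [mutate_one_a2Seed_of_odd (Nat.not_even_iff_odd.1 hn), hsucc, a2Seed_val_natCast]
  · rw [swapSeed_a2Seed, ← a2Seed_val_natCast, Nat.cast_add, hk, Nat.cast_ofNat]

theorem applyWord_a2Seed_val (k : ZMod 10) (w : List Move) :
    applyWord (a2Seed k.val) w = a2Seed (w.foldl a2Step k).val := by
  induction w generalizing k with
  | nil => rfl
  | cons m w ih => exact (congrArg (applyWord · w) (applyMove_a2Seed_val k m)).trans (ih _)

theorem orbitA2_eq_range : orbitA2 = Set.range fun k : ZMod 10 => a2Seed k.val := by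
  have h0 : initialSeed = a2Seed (0 : ZMod 10).val := a2Seed_zero.symm
  ext t
  constructor
  · rintro ⟨w, rfl⟩
    exact ⟨w.foldl a2Step 0, by rw [h0, applyWord_a2Seed_val]⟩
  · rintro ⟨k, rfl⟩
    refine ⟨[.m1, .m2, .m1, .m2, .m1, .m2, .m1, .m2, .m1].take k.val, ?_⟩
    rw [h0, applyWord_a2Seed_val]
    congr 2
    revert k
    decide

theorem a2Seed_val_injective : Function.Injective fun k : ZMod 10 => a2Seed k.val := by
  intro k l hkl
  apply ZMod.val_injective
  have hk := k.val_lt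
  have hl := l.val_lt
  simp only [a2Seed] at hkl
  split_ifs at hkl with hk2 hl2 hl2 <;>
    simp only [Prod.mk.injEq, Matrix.vecCons_inj, and_true] at hkl <;>
    simp only [Nat.even_iff] at hk2 hl2
  · have := mod_five_eq_of_lyness_Xv_eq hkl.2.1
    omega
  · norm_num at hkl
  · norm_num at hkl
  · have := mod_five_eq_of_lyness_Xv_eq hkl.2.2
    omega

/-- In type `A₂`: the `M₂`-orbit of the initial labelled seed has exactly 10
elements; `(μ₁μ₂)⁵` fixes every labelled seed in the orbit; and the
transposition `(1 2)` acts on the orbit as `μ₁μ₂μ₁μ₂μ₁`. -/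
theorem a2_orbit :
    orbitA2.ncard = 10 ∧
    (∀ t ∈ orbitA2,
      applyWord t [Move.m1, Move.m2, Move.m1, Move.m2, Move.m1,
        Move.m2, Move.m1, Move.m2, Move.m1, Move.m2] = t) ∧
    (∀ t ∈ orbitA2,
      applyWord t [Move.swap] =
        applyWord t [Move.m1, Move.m2, Move.m1, Move.m2, Move.m1]) := by
  rw [orbitA2_eq_range, Set.ncard_range_of_injective a2Seed_val_injective, Nat.card_zmod]
  refine ⟨rfl, ?_, ?_⟩ <;> rintro _ ⟨k, rfl⟩ <;> simp only [applyWord_a2Seed_val] <;>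
    congr 2 <;> revert k <;> decide

end
end
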